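/- Fix an integer m ≥ 1. There exists exactly one function g from words over {0,1,…,m} to R satisfying: (K0) g(∅) = 1 and g((0)) = 1+a; (K1a) g(0mv) = t^{#{i : v_i < m}}·g(v(m-1)) for every word v; (K1b) g(0w) = (t^{#{i : w_i < m}} + a)·g(w) for every nonempty word w whose first entry is strictly less than m; (K2) g(kv) = t^{#{i : v_i < k}}·g(v(k-1)) for every word v and every k with 1 ≤ k ≤ m-1; (K3) g(mv) = g(v(m-1)) + q·g(vm) for every word v. -/
import Mathlib


noncomputable section

/-- The polynomial ring `ℤ[q,t,a]`. -/
abbrev P : Type := MvPolynomial (Fin 3) ℤ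

/-- The variable `q`. -/
def q : P := MvPolynomial.X 0
/-- The variable `t`. -/
def t : P := MvPolynomial.X 1
/-- The variable `a`. -/
def a : P := MvPolynomial.X 2

/-- `R`, the localization of `ℤ[q,t,a]` at the element `1 - q`. -/
abbrev R : Type := Localization.Away (1 - q)

/-- The localization map `ℤ[q,t,a] → R`. -/
def φ : P →+* R := algebraMap P R

/-- `#{i : v_i < c}`, the number of entries of `v` strictly less than `c`. -/
def cntlt {m : ℕ} (c : ℕ) (v : List (Fin (m + 1))) : ℕ :=
  v.countP fun y => decide ((y : ℕ) < c)

/-- The relations (K0)–(K3) for a function `g` from words over `{0,1,…,m}` to `R`. -/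
def Krel (m : ℕ) (g : List (Fin (m + 1)) → R) : Prop :=
  -- (K0)
  g [] = 1 ∧
  g [(0 : Fin (m + 1))] = 1 + φ a ∧
  -- (K1a)
  (∀ v : List (Fin (m + 1)),
    g ((0 : Fin (m + 1)) :: Fin.last m :: v) =
      φ t ^ cntlt m v * g (v ++ [(⟨m - 1, by omega⟩ : Fin (m + 1))])) ∧
  -- (K1b)
  (∀ (x : Fin (m + 1)) (w : List (Fin (m + 1))), (x : ℕ) < m →
    g ((0 : Fin (m + 1)) :: x :: w) =
      (φ t ^ cntlt m (x :: w) + φ a) * g (x :: w)) ∧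
  -- (K2)
  (∀ (v : List (Fin (m + 1))) (k : ℕ) (_hk1 : 1 ≤ k) (_hk2 : k ≤ m - 1),
    g ((⟨k, by omega⟩ : Fin (m + 1)) :: v) =
      φ t ^ cntlt k v * g (v ++ [(⟨k - 1, by omega⟩ : Fin (m + 1))])) ∧
  -- (K3)
  (∀ v : List (Fin (m + 1)),
    g (Fin.last m :: v) =
      g (v ++ [(⟨m - 1, by omega⟩ : Fin (m + 1))]) + φ q * g (v ++ [Fin.last m]))

def mm1 (m : ℕ) : Fin (m + 1) := ⟨m - 1, by omega⟩

def sumv {m : ℕ} (v : List (Fin (m + 1))) : ℕ := (v.map Fin.val).sum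

def idxN (m : ℕ) : List (Fin (m + 1)) → ℕ
  | [] => 0
  | x :: v => if x = Fin.last m then idxN m v + 1 else 0

lemma sumv_append {m : ℕ} (v : List (Fin (m + 1))) (z : Fin (m + 1)) :
    sumv (v ++ [z]) = sumv v + z.val := by
  simp [sumv]

lemma sumv_cons {m : ℕ} (x : Fin (m + 1)) (v : List (Fin (m + 1))) :
    sumv (x :: v) = x.val + sumv v := by simp [sumv]

lemma idxN_append {m : ℕ} (v l : List (Fin (m + 1))) (h : ¬ ∀ z ∈ v, z = Fin.last m) :
    idxN m (v ++ l) = idxN m v := by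
  induction v with
  | nil => simp at h
  | cons x v ih =>
    by_cases hx : x = Fin.last m
    · have hnv : ¬ ∀ z ∈ v, z = Fin.last m := by
        intro hall
        apply h
        intro z hz
        rcases List.mem_cons.1 hz with h1 | h2
        · exact h1 ▸ hx
        · exact hall z h2
      simp only [List.cons_append, idxN, if_pos hx, List.append_eq, ih hnv]
    · simp only [List.cons_append, idxN, if_neg hx]

lemma all_last_append {m : ℕ} (v : List (Fin (m + 1))) (h : ∀ z ∈ v, z = Fin.last m) :
    v ++ [Fin.last m] = Fin.last m :: v := by
  have := List.eq_replicate_of_mem h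
  rw [this, ← List.replicate_succ', ← List.replicate_succ]

lemma last_ne_zero_pos {m : ℕ} (h : (Fin.last m : Fin (m+1)) ≠ 0) : 1 ≤ m := by
  by_contra hm
  exact h (by interval_cases m; rfl)

lemma unit_phi : IsUnit (φ (1 - q)) := IsLocalization.Away.algebraMap_isUnit (1 - q)

def build (m : ℕ) : List (Fin (m + 1)) → R
  | [] => 1
  | x :: v =>
    if hx0 : x = 0 then
      if hv : v = [] then 1 + φ a
      else if hy : v.headI = Fin.last m then
        φ t ^ cntlt m v.tail * build m (v.tail ++ [mm1 m])
      else (φ t ^ cntlt m v + φ a) * build m v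
    else if hxm : x = Fin.last m then
      if hall : ∀ z ∈ v, z = Fin.last m then
        Ring.inverse (φ (1 - q)) * build m (v ++ [mm1 m])
      else build m (v ++ [mm1 m]) + φ q * build m (v ++ [Fin.last m])
    else
      φ t ^ cntlt (x : ℕ) v * build m (v ++ [(⟨(x : ℕ) - 1, by have := x.isLt; omega⟩ : Fin (m + 1))])
termination_by w => (w.length, sumv w, idxN m w)
decreasing_by
  all_goals simp_wf
  · exact Prod.Lex.left _ _ (by have := List.length_pos_iff.mpr hv; omega)
  · exact Prod.Lex.left _ _ (by omega)
  · have hm : 1 ≤ m := last_ne_zero_pos (hxm ▸ hx0)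
    apply Prod.Lex.right
    apply Prod.Lex.left
    rw [sumv_append, sumv_cons, hxm]
    simp only [mm1, Fin.val_last]
    omega
  · have hm : 1 ≤ m := last_ne_zero_pos (hxm ▸ hx0)
    apply Prod.Lex.right
    apply Prod.Lex.left
    rw [sumv_append, sumv_cons, hxm]
    simp only [mm1, Fin.val_last]
    omega
  · rw [sumv_append, sumv_cons, hxm, Fin.val_last, Nat.add_comm (sumv v) m]
    apply Prod.Lex.right
    apply Prod.Lex.right
    rw [idxN_append _ _ hall]
    simp [idxN, hxm]
  · apply Prod.Lex.right
    apply Prod.Lex.left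
    rw [sumv_append, sumv_cons]
    have hx1 : (x : ℕ) ≠ 0 := fun h => hx0 (Fin.ext (by simp [h]))
    simp only []
    omega

theorem build_krel (m : ℕ) (hm : 1 ≤ m) : Krel m (build m) := by
  have hl0 : (Fin.last m : Fin (m + 1)) ≠ 0 := by
    intro h
    have := congrArg Fin.val h
    simp [Fin.val_last] at this
    omega
  refine ⟨by rw [build], ?_, ?_, ?_, ?_, ?_⟩
  · rw [build, dif_pos rfl, dif_pos rfl]
  · intro v
    rw [build, dif_pos rfl, dif_neg (by simp), dif_pos (by simp)]
    rfl
  · intro x w hx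
    have hxl : x ≠ Fin.last m := by
      intro h; rw [h, Fin.val_last] at hx; omega
    rw [build, dif_pos rfl, dif_neg (by simp), dif_neg (by simpa using hxl)]
  · intro v k hk1 hk2
    have h1 : (⟨k, by omega⟩ : Fin (m + 1)) ≠ 0 := by
      intro h; have := congrArg Fin.val h; simp at this; omega
    have h2 : (⟨k, by omega⟩ : Fin (m + 1)) ≠ Fin.last m := by
      intro h; have := congrArg Fin.val h; simp [Fin.val_last] at this; omega
    rw [build, dif_neg h1, dif_neg h2]
  · intro v
    rw [build, dif_neg hl0, dif_pos rfl]
    by_cases hall : ∀ z ∈ v, z = Fin.last m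
    · rw [dif_pos hall, all_last_append v hall]
      rw [build, dif_neg hl0, dif_pos rfl, dif_pos hall]
      have hci : (1 - φ q) * Ring.inverse (φ (1 - q)) = 1 := by
        rw [show (1 : R) - φ q = φ (1 - q) by rw [map_sub, map_one]]
        exact Ring.mul_inverse_cancel _ unit_phi
      simp only [mm1]
      linear_combination build m (v ++ [(⟨m - 1, by omega⟩ : Fin (m + 1))]) * hci
    · rw [dif_neg hall]
      rfl

theorem key (m : ℕ) (hm : 1 ≤ m) (g : List (Fin (m + 1)) → R) (hg : Krel m g) :
    ∀ w : List (Fin (m + 1)), g w = build m w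
  | [] => by rw [build]; exact hg.1
  | x :: v => by
    by_cases hx0 : x = 0
    · subst hx0
      rcases v with _ | ⟨y, w⟩
      · rw [build, dif_pos rfl, dif_pos rfl]; exact hg.2.1
      · by_cases hy : y = Fin.last m
        · subst hy
          rw [hg.2.2.1 w, key m hm g hg (w ++ [(⟨m - 1, by omega⟩ : Fin (m + 1))])]
          rw [build, dif_pos rfl, dif_neg (by simp), dif_pos (by simp)]
          rfl
        · have hylt : (y : ℕ) < m := by
            have h1 := y.isLt
            have h2 : (y : ℕ) ≠ m := fun h => hy (Fin.ext (by simp [Fin.val_last, h]))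
            omega
          rw [hg.2.2.2.1 y w hylt, key m hm g hg (y :: w)]
          conv_rhs => rw [build]
          rw [dif_pos rfl, dif_neg (by simp), dif_neg (by simpa using hy)]
    · by_cases hxm : x = Fin.last m
      · subst hxm
        by_cases hall : ∀ z ∈ v, z = Fin.last m
        · have h3 := hg.2.2.2.2.2 v
          rw [all_last_append v hall] at h3
          rw [key m hm g hg (v ++ [(⟨m - 1, by omega⟩ : Fin (m + 1))])] at h3
          rw [build, dif_neg hx0, dif_pos rfl, dif_pos hall]
          have hci : (1 - φ q) * Ring.inverse (φ (1 - q)) = 1 := by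
            rw [show (1 : R) - φ q = φ (1 - q) by rw [map_sub, map_one]]
            exact Ring.mul_inverse_cancel _ unit_phi
          simp only [mm1]
          linear_combination Ring.inverse (φ (1 - q)) * h3 -
            g (Fin.last m :: v) * hci
        · have h3 := hg.2.2.2.2.2 v
          rw [key m hm g hg (v ++ [(⟨m - 1, by omega⟩ : Fin (m + 1))]),
            key m hm g hg (v ++ [Fin.last m])] at h3
          rw [build, dif_neg hx0, dif_pos rfl, dif_neg hall]
          exact h3
      · have hx1 : 1 ≤ (x : ℕ) := by
          have : (x : ℕ) ≠ 0 := fun h => hx0 (Fin.ext (by simp [h]))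
          omega
        have hxle : (x : ℕ) ≤ m - 1 := by
          have h1 := x.isLt
          have h2 : (x : ℕ) ≠ m := fun h => hxm (Fin.ext (by simp [Fin.val_last, h]))
          omega
        have h2 := hg.2.2.2.2.1 v (x : ℕ) hx1 hxle
        simp only [Fin.eta] at h2
        rw [h2, key m hm g hg (v ++ [(⟨(x : ℕ) - 1, by omega⟩ : Fin (m + 1))])]
        rw [build, dif_neg hx0, dif_neg hxm]
termination_by w => (w.length, sumv w, idxN m w)
decreasing_by
  all_goals simp_wf
  all_goals first
    | exact Prod.Lex.left _ _ (by omega)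
    | (rw [sumv_append, sumv_cons, hxm, Fin.val_last, Nat.add_comm (sumv v) m]
       exact Prod.Lex.right _ (Prod.Lex.right _
         (by rw [idxN_append _ _ hall]; simp [idxN, hxm])))
    | (apply Prod.Lex.right
       apply Prod.Lex.left
       rw [sumv_append, sumv_cons, hxm, Fin.val_last]
       simp
       omega)
    | (apply Prod.Lex.right
       apply Prod.Lex.left
       rw [sumv_append, sumv_cons]
       have hx1' : (x : ℕ) ≠ 0 := fun h => hx0 (Fin.ext (by simp [h]))
       simp
       omega)


/-- There is exactly one function `g` from words over `{0,1,…,m}` to `R`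
satisfying (K0)–(K3). -/
theorem stmt5 (m : ℕ) (hm : 1 ≤ m) :
    ∃! g : List (Fin (m + 1)) → R, Krel m g :=
  ⟨build m, build_krel m hm, fun g hg => funext (key m hm g hg)⟩
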